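/- Let ρ be a density matrix on ℂ^d ⊗ ℂ^d. If ρ is separable, then τ(𝔄(ρ)) ≤ 1 (the realignment separability criterion). -/

import Mathlib

open scoped Matrix Kronecker BigOperators ComplexOrder
open MeasureTheory
open scoped InnerProductSpace

/-- Trace norm of a complex square matrix: `tr √(AᴴA)` (the sum of singular values). -/
noncomputable def traceNorm {n : Type*} [Fintype n] [DecidableEq n] (A : Matrix n n ℂ) : ℝ :=
  (let hA := (Matrix.posSemidef_conjTranspose_mul_self A).1;
    (hA.eigenvectorUnitary.1 * Matrix.diagonal (fun i => ((Real.sqrt (hA.eigenvalues i) : ℝ) : ℂ))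
      * (star hA.eigenvectorUnitary : Matrix n n ℂ)).trace).re

/-- The greatest cross norm `‖·‖_γ` of an operator on `ℂ^{d₁} ⊗ ℂ^{d₂}`: the infimum of
`Σᵢ ‖uᵢ‖₁ ‖vᵢ‖₁` over all finite decompositions `T = Σᵢ uᵢ ⊗ vᵢ` into Kronecker products. -/
noncomputable def gcn {d₁ d₂ : ℕ} (T : Matrix (Fin d₁ × Fin d₂) (Fin d₁ × Fin d₂) ℂ) : ℝ :=
  sInf { r : ℝ | ∃ (n : ℕ) (u : Fin n → Matrix (Fin d₁) (Fin d₁) ℂ)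
      (v : Fin n → Matrix (Fin d₂) (Fin d₂) ℂ),
      T = ∑ i, u i ⊗ₖ v i ∧ r = ∑ i, traceNorm (u i) * traceNorm (v i) }

/-- A density matrix: positive semidefinite with trace one. -/
def IsDensityMatrix {n : Type*} [Fintype n] (ρ : Matrix n n ℂ) : Prop :=
  ρ.PosSemidef ∧ ρ.trace = 1

/-- Separability of a state on `ℂ^{d₁} ⊗ ℂ^{d₂}`: a finite convex-type combination
`ρ = Σᵢ ωᵢ ρᵢ⁽¹⁾ ⊗ ρᵢ⁽²⁾` of Kronecker products of density matrices, with `ωᵢ ≥ 0`. -/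
def IsSeparable' {d₁ d₂ : ℕ} (ρ : Matrix (Fin d₁ × Fin d₂) (Fin d₁ × Fin d₂) ℂ) : Prop :=
  ∃ (n : ℕ) (ω : Fin n → ℝ) (ρ₁ : Fin n → Matrix (Fin d₁) (Fin d₁) ℂ)
    (ρ₂ : Fin n → Matrix (Fin d₂) (Fin d₂) ℂ),
    (∀ i, 0 ≤ ω i) ∧ (∀ i, IsDensityMatrix (ρ₁ i)) ∧ (∀ i, IsDensityMatrix (ρ₂ i)) ∧
    ρ = ∑ i, (ω i : ℂ) • (ρ₁ i ⊗ₖ ρ₂ i)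

/-- The realignment map `𝔄`: `𝔄(ρ)_{(i,j),(k,l)} = ρ_{(i,k),(j,l)}`. -/
def realign {d : ℕ} (ρ : Matrix (Fin d × Fin d) (Fin d × Fin d) ℂ) :
    Matrix (Fin d × Fin d) (Fin d × Fin d) ℂ :=
  Matrix.of fun p q => ρ (p.1, q.1) (p.2, q.2)

/-- `τ(𝔄(ρ))`: the trace norm of the realignment of `ρ`. -/
noncomputable def tauRealign {d : ℕ} (ρ : Matrix (Fin d × Fin d) (Fin d × Fin d) ℂ) : ℝ :=
  traceNorm (realign ρ)

/-- The flip operator `𝔽 = Σ_{i,j} |i⊗j⟩⟨j⊗i|` on `ℂ^d ⊗ ℂ^d`. -/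
def flipOp (d : ℕ) : Matrix (Fin d × Fin d) (Fin d × Fin d) ℂ :=
  Matrix.of fun p q => if p.1 = q.2 ∧ p.2 = q.1 then 1 else 0

/-- The Werner state `ρ_f = (1/(d³−d))((d−f) I + (df−1) 𝔽)` on `ℂ^d ⊗ ℂ^d`. -/
noncomputable def wernerState (d : ℕ) (f : ℝ) : Matrix (Fin d × Fin d) (Fin d × Fin d) ℂ :=
  (((d : ℂ) ^ 3 - d)⁻¹) • (((d : ℂ) - (f : ℂ)) • (1 : Matrix (Fin d × Fin d) (Fin d × Fin d) ℂ)
    + ((d : ℂ) * (f : ℂ) - 1) • flipOp d)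

/-- The maximally entangled vector `|Ψ⁺⟩ = (1/√d) Σᵢ |i⊗i⟩` on `ℂ^d ⊗ ℂ^d`. -/
noncomputable def psiPlus (d : ℕ) : Fin d × Fin d → ℂ :=
  fun p => if p.1 = p.2 then ((1 / Real.sqrt d : ℝ) : ℂ) else 0

/-- The isotropic state `ρ_F = ((1−F)/(d²−1))(I − |Ψ⁺⟩⟨Ψ⁺|) + F |Ψ⁺⟩⟨Ψ⁺|` on `ℂ^d ⊗ ℂ^d`. -/
noncomputable def isotropicState (d : ℕ) (F : ℝ) : Matrix (Fin d × Fin d) (Fin d × Fin d) ℂ :=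
  (((1 - F : ℝ) : ℂ) / ((d : ℂ) ^ 2 - 1)) •
      ((1 : Matrix (Fin d × Fin d) (Fin d × Fin d) ℂ)
        - Matrix.vecMulVec (psiPlus d) (star (psiPlus d)))
    + ((F : ℝ) : ℂ) • Matrix.vecMulVec (psiPlus d) (star (psiPlus d))

lemma traceNorm_eq' {n : Type*} [Fintype n] [DecidableEq n] (M : Matrix n n ℂ) :
    traceNorm M
      = ∑ i, Real.sqrt ((Matrix.posSemidef_conjTranspose_mul_self M).1.eigenvalues i) := by
  set hH := Matrix.posSemidef_conjTranspose_mul_self M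
  rw [traceNorm, Matrix.trace_mul_comm, ← Matrix.mul_assoc,
    Matrix.mem_unitaryGroup_iff'.mp (Matrix.IsHermitian.eigenvectorUnitary hH.1).2, Matrix.one_mul,
    Matrix.trace_diagonal]
  simp [Function.comp]

lemma bessel' {ι : Type*} [Fintype ι] {E : Type*} [NormedAddCommGroup E] [InnerProductSpace ℂ E]
    (u : ι → E) (horth : ∀ i j, i ≠ j → ⟪u i, u j⟫_ℂ = 0) (hle : ∀ i, ‖u i‖ ≤ 1) (a : E) :
    ∑ i, ‖⟪u i, a⟫_ℂ‖ ^ 2 ≤ ‖a‖ ^ 2 := by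
  classical
  set c : ι → ℂ := fun i => ⟪u i, a⟫_ℂ with hc
  set p : E := ∑ i, c i • u i with hp
  have hpa : ⟪p, a⟫_ℂ = ((∑ i, ‖c i‖ ^ 2 : ℝ) : ℂ) := by
    rw [hp, sum_inner]
    push_cast
    refine Finset.sum_congr rfl fun i _ => ?_
    rw [inner_smul_left]
    exact RCLike.conj_mul (⟪u i, a⟫_ℂ)
  have hpp : RCLike.re (⟪p, p⟫_ℂ) ≤ ∑ i, ‖c i‖ ^ 2 := by
    have : ⟪p, p⟫_ℂ = ∑ i, ((‖c i‖ ^ 2 * ‖u i‖ ^ 2 : ℝ) : ℂ) := by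
      rw [hp, sum_inner]
      refine Finset.sum_congr rfl fun i _ => ?_
      rw [inner_sum]
      rw [Finset.sum_eq_single i]
      · rw [inner_smul_left, inner_smul_right, inner_self_eq_norm_sq_to_K]
        push_cast
        rw [← mul_assoc, RCLike.conj_mul (c i)]
        norm_cast
      · intro j _ hj
        rw [inner_smul_left, inner_smul_right, horth i j (Ne.symm hj) , mul_zero, mul_zero]
      · intro h; exact absurd (Finset.mem_univ i) h
    rw [this]
    rw [map_sum]
    refine Finset.sum_le_sum fun i _ => ?_
    simp only [RCLike.re_to_complex, Complex.ofReal_re]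
    have h1 : ‖u i‖ ^ 2 ≤ 1 := by
      have := hle i
      nlinarith [norm_nonneg (u i)]
    nlinarith [sq_nonneg (‖c i‖)]
  have hkey : (0:ℝ) ≤ ‖a - p‖ ^ 2 := sq_nonneg _
  rw [@norm_sub_sq ℂ] at hkey
  have hre : RCLike.re ⟪a, p⟫_ℂ = ∑ i, ‖c i‖ ^ 2 := by
    rw [← inner_conj_symm a p, RCLike.conj_re, hpa]
    norm_cast
  have hn : ‖p‖ ^ 2 = RCLike.re ⟪p, p⟫_ℂ := (@inner_self_eq_norm_sq ℂ _ _ _ _ p).symm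
  rw [hre, hn] at hkey
  linarith

lemma trace_conj_diag {m : Type*} [Fintype m] [DecidableEq m]
    {V : Matrix m m ℂ} (hV : V ∈ Matrix.unitaryGroup m ℂ) (f : m → ℂ) :
    (V * Matrix.diagonal f * star V).trace = ∑ i, f i := by
  rw [Matrix.trace_mul_comm, ← Matrix.mul_assoc,
    Matrix.mem_unitaryGroup_iff'.mp hV, Matrix.one_mul, Matrix.trace_diagonal]

lemma frob_le_one {m : Type*} [Fintype m] [DecidableEq m] {A : Matrix m m ℂ}
    (hA : A.PosSemidef) (ht : A.trace = 1) :
    ∑ p : m × m, ‖A p.1 p.2‖ ^ 2 ≤ 1 := by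
  classical
  have hherm := hA.1
  set V : Matrix m m ℂ := (hherm.eigenvectorUnitary : Matrix m m ℂ) with hVdef
  have hU : V ∈ Matrix.unitaryGroup m ℂ := hherm.eigenvectorUnitary.2
  have hU' : star V * V = 1 := Matrix.mem_unitaryGroup_iff'.mp hU
  set lam := hherm.eigenvalues with hlam
  have hnn : ∀ i, 0 ≤ lam i := hA.eigenvalues_nonneg
  have hspec := hherm.spectral_theorem
  -- trace A = ∑ eigenvalues
  have htrA : (∑ i, lam i) = 1 := by
    have : A.trace = ∑ i, ((lam i : ℂ)) := by
      conv_lhs => rw [hspec]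
      exact trace_conj_diag hU _
    rw [ht] at this
    have := this.symm
    exact_mod_cast this
  -- A * A
  have hAA : A * A = V * Matrix.diagonal (fun i => (lam i : ℂ) * lam i) * star V := by
    conv_lhs => rw [hspec]
    simp only [Unitary.conjStarAlgAut_apply]
    simp only [Matrix.mul_assoc]
    rw [← Matrix.mul_assoc (star V) V, hU', Matrix.one_mul,
        ← Matrix.mul_assoc (Matrix.diagonal _) (Matrix.diagonal _), Matrix.diagonal_mul_diagonal]
    rfl
  have htrAA : (A * A).trace = ∑ i, ((lam i : ℂ) * lam i) := by
    rw [hAA]; exact trace_conj_diag hU _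
  -- Frobenius = trace (Aᴴ * A) = trace (A * A)
  have hfro : ∑ p : m × m, ‖A p.1 p.2‖ ^ 2 = ((Aᴴ * A).trace).re := by
    rw [Matrix.trace, Complex.re_sum]
    rw [Fintype.sum_prod_type_right]
    refine Finset.sum_congr rfl fun j _ => ?_
    rw [Matrix.diag_apply, Matrix.mul_apply, Complex.re_sum]
    refine Finset.sum_congr rfl fun i _ => ?_
    rw [Matrix.conjTranspose_apply]
    have : star (A i j) * A i j = (starRingEnd ℂ) (A i j) * A i j := rfl
    rw [this, ← Complex.normSq_eq_conj_mul_self]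
    rw [Complex.ofReal_re, Complex.normSq_eq_norm_sq]
  have : ∑ p : m × m, ‖A p.1 p.2‖ ^ 2 = ∑ i, lam i ^ 2 := by
    rw [hfro, hherm.eq, htrAA, Complex.re_sum]
    push_cast
    refine Finset.sum_congr rfl fun i _ => ?_
    norm_cast
    ring
  rw [this]
  calc ∑ i, lam i ^ 2 ≤ ∑ i, lam i * ∑ j, lam j := by
        refine Finset.sum_le_sum fun i _ => ?_
        rw [pow_two]
        exact mul_le_mul_of_nonneg_left
          (Finset.single_le_sum (fun j _ => hnn j) (Finset.mem_univ i)) (hnn i)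
    _ = (∑ i, lam i) * (∑ j, lam j) := by rw [← Finset.sum_mul]
    _ = 1 := by rw [htrA]; ring

lemma inv_sqrt_mul_self {x : ℝ} (hx : 0 ≤ x) : (Real.sqrt x)⁻¹ * x = Real.sqrt x := by
  rcases eq_or_lt_of_le hx with h | h
  · simp [← h]
  · have hs : Real.sqrt x ≠ 0 := ne_of_gt (Real.sqrt_pos.mpr h)
    field_simp
    rw [Real.sq_sqrt hx]

/-- The realignment separability criterion: if a density matrix `ρ` on `ℂ^d ⊗ ℂ^d`
is separable, then `τ(𝔄(ρ)) ≤ 1`. -/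
theorem tauRealign_le_one_of_separable (d : ℕ)
    (ρ : Matrix (Fin d × Fin d) (Fin d × Fin d) ℂ)
    (hρ : IsDensityMatrix ρ) (hsep : IsSeparable' ρ) :
    tauRealign ρ ≤ 1 := by
  classical
  obtain ⟨N, ω, ρ₁, ρ₂, hω, hd1, hd2, hrep⟩ := hsep
  set M : Matrix (Fin d × Fin d) (Fin d × Fin d) ℂ := realign ρ with hMdef
  set a : Fin N → (Fin d × Fin d) → ℂ := fun j p => ρ₁ j p.1 p.2 with ha
  set b : Fin N → (Fin d × Fin d) → ℂ := fun j q => ρ₂ j q.1 q.2 with hb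
  have hMentry : ∀ p q, M p q = ∑ j, (ω j : ℂ) * (a j p * b j q) := by
    intro p q
    simp only [hMdef, realign, Matrix.of_apply, hrep, Matrix.sum_apply, Matrix.smul_apply,
      Matrix.kroneckerMap_apply, smul_eq_mul, ha, hb]
  set hH := Matrix.posSemidef_conjTranspose_mul_self M with hHdef
  have hherm := hH.1
  set lam : (Fin d × Fin d) → ℝ := hherm.eigenvalues with hlam
  have hnn : ∀ i, 0 ≤ lam i := hH.eigenvalues_nonneg
  set v : (Fin d × Fin d) → EuclideanSpace ℂ (Fin d × Fin d) :=
    fun i => hherm.eigenvectorBasis i with hv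
  have hvinner : ∀ i j, ⟪v i, v j⟫_ℂ = if i = j then 1 else 0 := fun i j =>
    orthonormal_iff_ite.mp hherm.eigenvectorBasis.orthonormal i j
  -- the vectors M vᵢ and their inner products
  set Mv : (Fin d × Fin d) → EuclideanSpace ℂ (Fin d × Fin d) :=
    fun i => (WithLp.equiv 2 _).symm (M *ᵥ ⇑(v i)) with hMv
  have hMvinner : ∀ i j, ⟪Mv i, Mv j⟫_ℂ = if i = j then (lam i : ℂ) else 0 := by
    intro i j
    rw [hMv, EuclideanSpace.inner_eq_star_dotProduct]
    simp only [WithLp.equiv_symm_apply, WithLp.ofLp_toLp]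
    rw [dotProduct_comm]
    have h1 : star (M *ᵥ ⇑(v i)) ⬝ᵥ (M *ᵥ ⇑(v j)) = star (⇑(v i)) ⬝ᵥ ((Mᴴ * M) *ᵥ ⇑(v j)) := by
      rw [Matrix.star_mulVec, ← Matrix.mulVec_mulVec]
      simp only [Matrix.dotProduct_mulVec]
    rw [h1, hv, hherm.mulVec_eigenvectorBasis j]
    have h2 : star (⇑(hherm.eigenvectorBasis i)) ⬝ᵥ
        (hherm.eigenvalues j • ⇑(hherm.eigenvectorBasis j)) =
        ((hherm.eigenvalues j : ℂ)) * (star (⇑(hherm.eigenvectorBasis i)) ⬝ᵥ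
          ⇑(hherm.eigenvectorBasis j)) := by
      simp only [dotProduct, Pi.smul_apply, Complex.real_smul, Finset.mul_sum]
      try exact Finset.sum_congr rfl fun k _ => by ring
    rw [h2]
    have h3 : star (⇑(hherm.eigenvectorBasis i)) ⬝ᵥ ⇑(hherm.eigenvectorBasis j)
        = ⟪v i, v j⟫_ℂ := by rw [EuclideanSpace.inner_eq_star_dotProduct, dotProduct_comm]
    rw [h3, hvinner i j]
    split_ifs with h
    · subst h; rw [mul_one]
    · rw [mul_zero]
  -- the left singular-type vectors uᵢ
  set u : (Fin d × Fin d) → EuclideanSpace ℂ (Fin d × Fin d) :=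
    fun i => (((Real.sqrt (lam i))⁻¹ : ℝ) : ℂ) • Mv i with hu
  have huinner : ∀ i j, ⟪u i, u j⟫_ℂ =
      (((Real.sqrt (lam i))⁻¹ : ℝ) : ℂ) * (((Real.sqrt (lam j))⁻¹ : ℝ) : ℂ)
        * (if i = j then (lam i : ℂ) else 0) := by
    intro i j
    rw [hu, inner_smul_left, inner_smul_right, hMvinner i j, Complex.conj_ofReal]
    ring
  have horth : ∀ i j, i ≠ j → ⟪u i, u j⟫_ℂ = 0 := by
    intro i j hij
    rw [huinner i j, if_neg hij, mul_zero]
  have hule : ∀ i, ‖u i‖ ≤ 1 := by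
    intro i
    have h1 : (‖u i‖ : ℝ) ^ 2 = RCLike.re ⟪u i, u i⟫_ℂ :=
      (@inner_self_eq_norm_sq ℂ _ _ _ _ (u i)).symm
    rw [huinner i i, if_pos rfl] at h1
    have h2 : RCLike.re ((((Real.sqrt (lam i))⁻¹ : ℝ) : ℂ) * (((Real.sqrt (lam i))⁻¹ : ℝ) : ℂ)
        * ((lam i : ℝ) : ℂ)) = (Real.sqrt (lam i))⁻¹ * (Real.sqrt (lam i))⁻¹ * lam i := by
      norm_cast
    rw [h2] at h1
    have h3 : ‖u i‖ ^ 2 ≤ 1 := by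
      rw [h1, mul_assoc, inv_sqrt_mul_self (hnn i)]
      rcases eq_or_lt_of_le (hnn i) with h | h
      · simp [← h]
      · rw [inv_mul_cancel₀ (ne_of_gt (Real.sqrt_pos.mpr h))]
    nlinarith [norm_nonneg (u i)]
  -- √λᵢ = re ⟪uᵢ, M vᵢ⟫
  have hsqrt : ∀ i, Real.sqrt (lam i) = (⟪u i, Mv i⟫_ℂ).re := by
    intro i
    rw [hu, inner_smul_left, hMvinner i i, if_pos rfl, Complex.conj_ofReal]
    have : ((((Real.sqrt (lam i))⁻¹ : ℝ) : ℂ) * ((lam i : ℝ) : ℂ)).re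
        = (Real.sqrt (lam i))⁻¹ * lam i := by norm_cast
    rw [this, inv_sqrt_mul_self (hnn i)]
  -- expansion of ⟪uᵢ, M vᵢ⟫ via the separable decomposition
  set ca : Fin N → (Fin d × Fin d) → ℂ :=
    fun j i => ∑ p, (starRingEnd ℂ) (u i p) * a j p with hca
  set cb : Fin N → (Fin d × Fin d) → ℂ := fun j i => ∑ q, b j q * v i q with hcb
  have hMvapp : ∀ i p, (M *ᵥ ⇑(v i)) p = ∑ j, (ω j : ℂ) * a j p * cb j i := by
    intro i p
    simp only [Matrix.mulVec, dotProduct, hMentry, Finset.sum_mul, hcb, Finset.mul_sum]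
    rw [Finset.sum_comm]
    exact Finset.sum_congr rfl fun j _ => Finset.sum_congr rfl fun q _ => by ring
  have hexp : ∀ i, ⟪u i, Mv i⟫_ℂ = ∑ j, (ω j : ℂ) * (ca j i * cb j i) := by
    intro i
    rw [hMv, EuclideanSpace.inner_eq_star_dotProduct]
    simp only [WithLp.equiv_symm_apply, WithLp.ofLp_toLp]
    rw [dotProduct_comm]
    simp only [dotProduct, Pi.star_apply, hMvapp, Finset.mul_sum]
    rw [Finset.sum_comm]
    refine Finset.sum_congr rfl fun j _ => ?_
    simp only [hca, Finset.sum_mul, Finset.mul_sum]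
    exact Finset.sum_congr rfl fun p _ => by simp only [Complex.star_def]; ring
  -- trace norm as sum of square roots of eigenvalues
  have htau : tauRealign ρ = ∑ i, Real.sqrt (lam i) := traceNorm_eq' M
  -- the Euclidean vectors built from a and b
  set aE : Fin N → EuclideanSpace ℂ (Fin d × Fin d) :=
    fun j => (WithLp.equiv 2 _).symm (a j) with haE
  set bE : Fin N → EuclideanSpace ℂ (Fin d × Fin d) :=
    fun j => (WithLp.equiv 2 _).symm (fun q => (starRingEnd ℂ) (b j q)) with hbE
  have hinner_ca : ∀ j i, ⟪u i, aE j⟫_ℂ = ca j i := by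
    intro j i
    rw [haE, EuclideanSpace.inner_eq_star_dotProduct, dotProduct_comm]
    simp only [WithLp.equiv_symm_apply, WithLp.ofLp_toLp, dotProduct, Pi.star_apply, Complex.star_def, hca]
  have hinner_cb : ∀ j i, ⟪v i, bE j⟫_ℂ = (starRingEnd ℂ) (cb j i) := by
    intro j i
    rw [hbE, EuclideanSpace.inner_eq_star_dotProduct, dotProduct_comm]
    simp only [WithLp.equiv_symm_apply, WithLp.ofLp_toLp, dotProduct, Pi.star_apply, Complex.star_def, hcb]
    rw [map_sum]
    exact Finset.sum_congr rfl fun q _ => by rw [map_mul]; ring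
  -- the Frobenius norms of the density factors are at most 1
  have haE_norm : ∀ j, ‖aE j‖ ^ 2 ≤ 1 := by
    intro j
    rw [EuclideanSpace.norm_eq, Real.sq_sqrt (by positivity)]
    have := frob_le_one (hd1 j).1 (hd1 j).2
    calc ∑ p, ‖aE j p‖ ^ 2 = ∑ p : Fin d × Fin d, ‖ρ₁ j p.1 p.2‖ ^ 2 := rfl
      _ ≤ 1 := this
  have hbE_norm : ∀ j, ‖bE j‖ ^ 2 ≤ 1 := by
    intro j
    rw [EuclideanSpace.norm_eq, Real.sq_sqrt (by positivity)]
    have := frob_le_one (hd2 j).1 (hd2 j).2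
    calc ∑ q, ‖bE j q‖ ^ 2 = ∑ q : Fin d × Fin d, ‖ρ₂ j q.1 q.2‖ ^ 2 := by
          refine Finset.sum_congr rfl fun q _ => ?_
          have : ‖bE j q‖ = ‖ρ₂ j q.1 q.2‖ := RCLike.norm_conj _
          rw [this]
      _ ≤ 1 := this
  -- Bessel-type bounds
  have hcaS : ∀ j, ∑ i, ‖ca j i‖ ^ 2 ≤ 1 := by
    intro j
    have h1 := bessel' u horth hule (aE j)
    simp only [hinner_ca] at h1
    exact h1.trans (haE_norm j)
  have hvorth : ∀ i j, i ≠ j → ⟪v i, v j⟫_ℂ = 0 := fun i j hij => by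
    rw [hvinner i j, if_neg hij]
  have hvle : ∀ i, ‖v i‖ ≤ 1 := by
    intro i
    have h1 : (‖v i‖ : ℝ) ^ 2 = RCLike.re ⟪v i, v i⟫_ℂ :=
      (@inner_self_eq_norm_sq ℂ _ _ _ _ (v i)).symm
    rw [hvinner i i, if_pos rfl] at h1
    simp only [RCLike.one_re] at h1
    nlinarith [norm_nonneg (v i)]
  have hcbS : ∀ j, ∑ i, ‖cb j i‖ ^ 2 ≤ 1 := by
    intro j
    have h1 := bessel' v hvorth hvle (bE j)
    simp only [hinner_cb] at h1
    have h2 : ∑ i, ‖(starRingEnd ℂ) (cb j i)‖ ^ 2 = ∑ i, ‖cb j i‖ ^ 2 :=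
      Finset.sum_congr rfl fun i _ => by rw [RCLike.norm_conj]
    rw [h2] at h1
    exact h1.trans (hbE_norm j)
  -- the weights sum to one
  have hωsum : ∑ j, ω j = 1 := by
    have h1 : ρ.trace = ∑ j, (ω j : ℂ) * ((ρ₁ j).trace * (ρ₂ j).trace) := by
      rw [hrep, Matrix.trace_sum]
      exact Finset.sum_congr rfl fun j _ => by
        rw [Matrix.trace_smul, Matrix.trace_kronecker, smul_eq_mul]
    rw [hρ.2] at h1
    have h2 : (1 : ℂ) = ∑ j, (ω j : ℂ) := by
      rw [h1]
      exact Finset.sum_congr rfl fun j _ => by rw [(hd1 j).2, (hd2 j).2, one_mul, mul_one]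
    exact_mod_cast h2.symm
  -- final chain
  rw [htau]
  calc ∑ i, Real.sqrt (lam i) = ∑ i, (⟪u i, Mv i⟫_ℂ).re :=
        Finset.sum_congr rfl fun i _ => hsqrt i
    _ = ∑ i, ∑ j, ((ω j : ℂ) * (ca j i * cb j i)).re := by
        refine Finset.sum_congr rfl fun i _ => ?_
        rw [hexp i, Complex.re_sum]
    _ ≤ ∑ i, ∑ j, ω j * (‖ca j i‖ * ‖cb j i‖) := by
        refine Finset.sum_le_sum fun i _ => Finset.sum_le_sum fun j _ => ?_
        calc ((ω j : ℂ) * (ca j i * cb j i)).re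
            ≤ ‖(ω j : ℂ) * (ca j i * cb j i)‖ := Complex.re_le_norm _
          _ = ω j * (‖ca j i‖ * ‖cb j i‖) := by
              rw [norm_mul, norm_mul, Complex.norm_real, Real.norm_of_nonneg (hω j)]
    _ = ∑ j, ω j * ∑ i, ‖ca j i‖ * ‖cb j i‖ := by
        rw [Finset.sum_comm]
        exact Finset.sum_congr rfl fun j _ => by rw [Finset.mul_sum]
    _ ≤ ∑ j, ω j * 1 := by
        refine Finset.sum_le_sum fun j _ => mul_le_mul_of_nonneg_left ?_ (hω j)
        calc ∑ i, ‖ca j i‖ * ‖cb j i‖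
            ≤ Real.sqrt (∑ i, ‖ca j i‖ ^ 2) * Real.sqrt (∑ i, ‖cb j i‖ ^ 2) :=
              Real.sum_mul_le_sqrt_mul_sqrt _ _ _
          _ ≤ 1 * 1 := mul_le_mul (Real.sqrt_le_one.mpr (hcaS j)) (Real.sqrt_le_one.mpr (hcbS j))
                (Real.sqrt_nonneg _) zero_le_one
          _ = 1 := one_mul 1
    _ = 1 := by simp only [mul_one]; exact hωsum
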